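/- The KS-fermion Hamiltonian decomposes via the discrete exterior derivative: H_{KS;h} = -i(𝐝 - 𝐝*) = (-i𝐝) + (-i𝐝)* on ℓ²(2hℤ^d) ⊗ ℂ^Λ. -/

import Mathlib

noncomputable section

/-- The `j`-th standard basis vector of `ℤ^d`. -/
def e (d : ℕ) (j : Fin d) : Fin d → ℤ := Pi.single j 1

/-- `s_{j-1}(a)` for `a ∈ Λ = {0,1}^d`. -/
def sL (d : ℕ) (j : Fin d) (a : Fin d → Fin 2) : ℕ :=
  ∑ k ∈ Finset.univ.filter (fun k : Fin d => k < j), (a k : ℕ)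

/-- Forward difference `D^+_{2h;j}` on functions on `2hℤ^d` (indexed by `ℤ^d`). -/
def Dp2 (d : ℕ) (h : ℝ) (j : Fin d) (v : (Fin d → ℤ) → ℂ) : (Fin d → ℤ) → ℂ :=
  fun m => (1 / (2 * Complex.I * h)) * (v (m + e d j) - v m)

/-- Backward difference `D^-_{2h;j}` on functions on `2hℤ^d`. -/
def Dm2 (d : ℕ) (h : ℝ) (j : Fin d) (v : (Fin d → ℤ) → ℂ) : (Fin d → ℤ) → ℂ :=
  fun m => (1 / (2 * Complex.I * h)) * (v m - v (m - e d j))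

/-- The KS-fermion Hamiltonian on `ℓ²(2hℤ^d) ⊗ ℂ^Λ`. -/
def HKS (d : ℕ) (h : ℝ) (w : (Fin d → Fin 2) → (Fin d → ℤ) → ℂ) :
    (Fin d → Fin 2) → (Fin d → ℤ) → ℂ :=
  fun a m => ∑ j : Fin d,
    if a j = 1 then
      ((-1 : ℂ) ^ (sL d j a)) * Dp2 d h j (w (Function.update a j 0)) m
    else
      ((-1 : ℂ) ^ (sL d j a)) * Dm2 d h j (w (Function.update a j 1)) m

/-- The discrete exterior derivative `𝐝` on `ℓ²(2hℤ^d) ⊗ ℂ^Λ`. -/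
def Dop (d : ℕ) (h : ℝ) (w : (Fin d → Fin 2) → (Fin d → ℤ) → ℂ) :
    (Fin d → Fin 2) → (Fin d → ℤ) → ℂ :=
  fun a m => ∑ j : Fin d,
    if a j = 1 then
      ((-1 : ℂ) ^ (sL d j a)) * (Complex.I * Dp2 d h j (w (Function.update a j 0)) m)
    else 0

/-! Pairing the adjointness relation with the unit vector `δ_{(a,m)}` determines `𝐝*` pointwise.
Since `D^+_{2h;j}` and `D^-_{2h;j}` are mutually adjoint, `(i D^+_{2h;j})* = -i D^-_{2h;j}`, so `𝐝*`
has the entries `(-1)^{s_{j-1}(a)} (-i) D^-_{2h;j}` at `b = a + e_j`. Multiplying `𝐝 - 𝐝*` by `-i`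
turns `i D^+` into `D^+` and `-(-i) D^-` into `D^-`, which are exactly the entries of `H_{KS;h}`. -/

open Complex

theorem Function.apply_eq_and_update_eq_iff {ι α : Type*} [DecidableEq ι] (a b : ι → α) (j : ι)
    (x y : α) : (b j = y ∧ Function.update b j x = a) ↔ (a j = x ∧ b = Function.update a j y) := by
  constructor
  · rintro ⟨hb, rfl⟩
    simp [← hb]
  · rintro ⟨ha, rfl⟩
    simp [← ha]

theorem apply_eq_tsum_star_single_of_adjoint {α β : Type*} [DecidableEq α] [DecidableEq β]
    {c : ℂ} (hc : c ≠ 0) {T S : (α → β → ℂ) → α → β → ℂ}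
    (hadj : ∀ w w' : α → β → ℂ, Memℓp (fun p : α × β => w p.1 p.2) 2 →
      Memℓp (fun p : α × β => w' p.1 p.2) 2 →
      c * ∑' a, ∑' m, star (T w a m) * w' a m = c * ∑' a, ∑' m, star (w a m) * S w' a m)
    {w : α → β → ℂ} (hw : Memℓp (fun p : α × β => w p.1 p.2) 2) (a : α) (m : β) :
    S w a m = ∑' b, ∑' n, star (T (Pi.single a (Pi.single m 1)) b n) * w b n := by
  have hsingle : Memℓp (fun p : α × β => (Pi.single a (Pi.single m 1) : α → β → ℂ) p.1 p.2) 2 := by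
    have hprod : (fun p : α × β => (Pi.single a (Pi.single m 1) : α → β → ℂ) p.1 p.2) =
        Pi.single (a, m) 1 := by
      funext ⟨b, n⟩
      by_cases hb : b = a <;> simp [hb, Pi.single_apply]
    rw [hprod]
    exact (memℓp_zero ((Set.finite_singleton (a, m)).subset Pi.support_single_subset))
      |>.of_exponent_ge zero_le
  rw [mul_left_cancel₀ hc (hadj _ w hsingle hw), tsum_eq_single a, tsum_eq_single m]
  · simp
  · intro n hn
    simp [hn]
  · intro b hb
    simp [hb]

namespace KS

variable {d : ℕ}

def DopAdj (d : ℕ) (h : ℝ) (w : (Fin d → Fin 2) → (Fin d → ℤ) → ℂ) :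
    (Fin d → Fin 2) → (Fin d → ℤ) → ℂ :=
  fun a m => ∑ j : Fin d,
    if a j = 0 then (-1 : ℂ) ^ sL d j a * (-I * Dm2 d h j (w (Function.update a j 1)) m) else 0

theorem HKS_eq_neg_I_mul_Dop_sub_DopAdj (h : ℝ) (w : (Fin d → Fin 2) → (Fin d → ℤ) → ℂ)
    (a : Fin d → Fin 2) (m : Fin d → ℤ) :
    HKS d h w a m = -I * (Dop d h w a m - DopAdj d h w a m) := by
  rw [HKS, Dop, DopAdj, ← Finset.sum_sub_distrib, Finset.mul_sum]
  refine Finset.sum_congr rfl fun j _ => ?_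
  by_cases hj : a j = 1
  · simp only [hj, if_true, one_ne_zero, if_false, sub_zero]
    linear_combination (-1 : ℂ) ^ sL d j a * Dp2 d h j (w (Function.update a j 0)) m * I_mul_I
  · have hj0 : a j = 0 := by omega
    rw [if_neg hj, if_neg hj, if_pos hj0, zero_sub]
    linear_combination (-1 : ℂ) ^ sL d j a * Dm2 d h j (w (Function.update a j 1)) m * I_mul_I

theorem sL_update (j : Fin d) (a : Fin d → Fin 2) (x : Fin 2) :
    sL d j (Function.update a j x) = sL d j a :=
  Finset.sum_congr rfl fun k hk => by
    rw [Function.update_of_ne (Finset.mem_filter.mp hk).2.ne]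

theorem e_ne_zero (j : Fin d) : e d j ≠ 0 := by
  simp [e]

theorem hasSum_star_Dp2_single_mul (h : ℝ) (j : Fin d) (m : Fin d → ℤ)
    (v : (Fin d → ℤ) → ℂ) :
    HasSum (fun n => star (Dp2 d h j (Pi.single m 1) n) * v n) (Dm2 d h j v m) := by
  have hshift : ∀ n, (Pi.single m 1 : (Fin d → ℤ) → ℂ) (n + e d j) =
      (Pi.single (m - e d j) 1 : (Fin d → ℤ) → ℂ) n :=
    fun n => by simp only [Pi.single_apply, eq_sub_iff_add_eq]
  have hstar : star (1 / (2 * I * h) : ℂ) = -(1 / (2 * I * h)) := by simp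
  have hsum : (fun n => star (Dp2 d h j (Pi.single m 1) n) * v n) = fun n =>
      -(1 / (2 * I * h)) * ((Pi.single (m - e d j) (v (m - e d j)) : (Fin d → ℤ) → ℂ) n -
        (Pi.single m (v m) : (Fin d → ℤ) → ℂ) n) := by
    funext n
    rw [Dp2, hshift, star_mul', hstar]
    rcases eq_or_ne n (m - e d j) with rfl | h1
    · simp [e_ne_zero]
    rcases eq_or_ne n m with rfl | h2
    · simp [h1]
    · simp [h1, h2]
  rw [hsum, Dm2, show 1 / (2 * I * h) * (v m - v (m - e d j)) =
    -(1 / (2 * I * h)) * (v (m - e d j) - v m) by ring]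
  exact ((hasSum_pi_single (m - e d j) (v (m - e d j))).sub
    (hasSum_pi_single m (v m))).mul_left (-(1 / (2 * I * h)))

theorem Dop_single (h : ℝ) (a b : Fin d → Fin 2) (m n : Fin d → ℤ) :
    Dop d h (Pi.single a (Pi.single m 1)) b n =
      ∑ j, if a j = 0 ∧ b = Function.update a j 1 then
        (-1 : ℂ) ^ sL d j a * (I * Dp2 d h j (Pi.single m 1) n) else 0 := by
  refine Finset.sum_congr rfl fun j _ => ?_
  have hcond := Function.apply_eq_and_update_eq_iff a b j 0 1
  by_cases hbj : b j = 1
  · by_cases hba : Function.update b j 0 = a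
    · rw [if_pos (hcond.1 ⟨hbj, hba⟩)]
      subst hba
      simp [hbj, sL_update]
    · rw [if_neg fun hc => hba (hcond.2 hc).2]
      simp [hbj, hba, Dp2]
  · rw [if_neg fun hc => hbj (hcond.2 hc).1]
    simp [hbj]

theorem tsum_tsum_star_Dop_single_mul (h : ℝ) (a : Fin d → Fin 2) (m : Fin d → ℤ)
    (w : (Fin d → Fin 2) → (Fin d → ℤ) → ℂ) :
    ∑' b, ∑' n, star (Dop d h (Pi.single a (Pi.single m 1)) b n) * w b n = DopAdj d h w a m := by
  have hinner : ∀ b, HasSum (fun n => star (Dop d h (Pi.single a (Pi.single m 1)) b n) * w b n)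
      (∑ j, if a j = 0 ∧ b = Function.update a j 1 then
        (-1 : ℂ) ^ sL d j a * (-I * Dm2 d h j (w b) m) else 0) := by
    intro b
    simp only [Dop_single, star_sum, Finset.sum_mul]
    refine hasSum_sum fun j _ => ?_
    split_ifs
    · set σ : ℂ := (-1) ^ sL d j a
      have hσ : star σ = σ := by simp [σ]
      have hfun : (fun n => star (σ * (I * Dp2 d h j (Pi.single m 1) n)) * w b n) =
          fun n => -I * σ * (star (Dp2 d h j (Pi.single m 1) n) * w b n) := by
        funext n
        simp only [star_mul', hσ, star_def, conj_I]
        ring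
      rw [hfun, ← mul_assoc, mul_comm σ]
      exact (hasSum_star_Dp2_single_mul h j m (w b)).mul_left _
    · simp only [star_zero, zero_mul]
      exact hasSum_zero
  rw [tsum_congr fun b => (hinner b).tsum_eq, tsum_fintype, Finset.sum_comm]
  refine Finset.sum_congr rfl fun j _ => ?_
  by_cases ha : a j = 0 <;> simp [ha]

end KS

theorem stmt11_general (d : ℕ) (h : ℝ) (hh : 0 < h)
    (Ds : ((Fin d → Fin 2) → (Fin d → ℤ) → ℂ) → ((Fin d → Fin 2) → (Fin d → ℤ) → ℂ))
    (hadj : ∀ w w' : (Fin d → Fin 2) → (Fin d → ℤ) → ℂ,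
      Memℓp (fun p : (Fin d → Fin 2) × (Fin d → ℤ) => w p.1 p.2) 2 →
      Memℓp (fun p : (Fin d → Fin 2) × (Fin d → ℤ) => w' p.1 p.2) 2 →
      (((2 * h) ^ d : ℝ) : ℂ) *
          ∑' a : Fin d → Fin 2, ∑' m : Fin d → ℤ, star (Dop d h w a m) * w' a m
        = (((2 * h) ^ d : ℝ) : ℂ) *
          ∑' a : Fin d → Fin 2, ∑' m : Fin d → ℤ, star (w a m) * Ds w' a m) :
    ∀ w : (Fin d → Fin 2) → (Fin d → ℤ) → ℂ,
      Memℓp (fun p : (Fin d → Fin 2) × (Fin d → ℤ) => w p.1 p.2) 2 →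
      ∀ (a : Fin d → Fin 2) (m : Fin d → ℤ),
        HKS d h w a m = -Complex.I * (Dop d h w a m - Ds w a m) := by
  intro w hw a m
  have hc : (((2 * h) ^ d : ℝ) : ℂ) ≠ 0 := by
    exact_mod_cast (pow_pos (mul_pos two_pos hh) d).ne'
  rw [KS.HKS_eq_neg_I_mul_Dop_sub_DopAdj, apply_eq_tsum_star_single_of_adjoint hc hadj hw,
    KS.tsum_tsum_star_Dop_single_mul]

/-- `H_{KS;h} = -i(𝐝 - 𝐝*)`: for any operator `Ds` that is adjoint to `𝐝` with respect
to the `ℓ²(2hℤ^d) ⊗ ℂ^Λ` inner product `(2h)^d ∑_a ∑_m conj(·)·`, one has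
`H_{KS;h} w = -i (𝐝 w - Ds w)` for all `ℓ²` elements `w`. -/
theorem stmt11 (d : ℕ) (hd : 1 ≤ d) (h : ℝ) (hh : 0 < h)
    (Ds : ((Fin d → Fin 2) → (Fin d → ℤ) → ℂ) → ((Fin d → Fin 2) → (Fin d → ℤ) → ℂ))
    (hadj : ∀ w w' : (Fin d → Fin 2) → (Fin d → ℤ) → ℂ,
      Memℓp (fun p : (Fin d → Fin 2) × (Fin d → ℤ) => w p.1 p.2) 2 →
      Memℓp (fun p : (Fin d → Fin 2) × (Fin d → ℤ) => w' p.1 p.2) 2 →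
      (((2 * h) ^ d : ℝ) : ℂ) *
          ∑' a : Fin d → Fin 2, ∑' m : Fin d → ℤ, star (Dop d h w a m) * w' a m
        = (((2 * h) ^ d : ℝ) : ℂ) *
          ∑' a : Fin d → Fin 2, ∑' m : Fin d → ℤ, star (w a m) * Ds w' a m) :
    ∀ w : (Fin d → Fin 2) → (Fin d → ℤ) → ℂ,
      Memℓp (fun p : (Fin d → Fin 2) × (Fin d → ℤ) => w p.1 p.2) 2 →
      ∀ (a : Fin d → Fin 2) (m : Fin d → ℤ),
        HKS d h w a m = -Complex.I * (Dop d h w a m - Ds w a m) :=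
  stmt11_general d h hh Ds hadj
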